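/- arXiv:2311.08325 — 2 statements merged into one kernel-verified Lean document; each statement's English description precedes it below -/
import Mathlib

section
/- Fix ℓ ≥ 1, m ≥ 1, a symbol Λ₁, and 1 ≤ k ≤ min(ℓ, m). The number of length-m run-length-ℓ-limited sequences over Fin 4 whose first k symbols all equal Λ₁ and (if k < m) whose (k+1)-th symbol differs from Λ₁ satisfies N_{Λ₁,k}(m) = 3·N(m−k)/4 whenever m − k ≥ 1, where N denotes the total count of run-length-ℓ-limited sequences (using N(m') = total count for m' ≥ 1). -/
open Mathlib

/-- A sequence (as a list) contains a run of `L` identical consecutive symbols. -/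
def hasRun (L : ℕ) (l : List (Fin 4)) : Prop := ∃ x : Fin 4, List.replicate L x <:+: l

instance (L : ℕ) (l : List (Fin 4)) : Decidable (hasRun L l) := by
  unfold hasRun; infer_instance

/-- Total count of run-length-`ℓ`-limited length-`m` sequences over `Fin 4`. -/
noncomputable def N (ℓ m : ℕ) : ℕ :=
  Fintype.card {v : List.Vector (Fin 4) m // ¬ hasRun (ℓ + 1) v.toList}

/-- Count of run-length-`ℓ`-limited length-`m` sequences over `Fin 4` whose maximal
initial run of `Λ₁` has length exactly `k`: the first `k` symbols equal `Λ₁`, and if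
`k < m` the `(k+1)`-th symbol differs from `Λ₁`. -/
noncomputable def NΛk (ℓ m : ℕ) (Λ₁ : Fin 4) (k : ℕ) : ℕ :=
  Fintype.card {v : List.Vector (Fin 4) m //
    ¬ hasRun (ℓ + 1) v.toList ∧ (∀ i < k, v.toList.getD i 0 = Λ₁) ∧
      (k < m → v.toList.getD k 0 ≠ Λ₁)}

/-!
A sequence counted by `NΛk ℓ m Λ₁ k` is `k` copies of `Λ₁` followed by a tail of length `m - k` that does
not start with `Λ₁`. As `k ≤ ℓ` and the symbol changes at the junction, no run of length `ℓ + 1`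
meets the prefix, so the sequence is run-length-limited exactly when its tail is. Swapping two
symbols preserves run-length-limitation, so each of the four possible first symbols accounts for
a quarter of the `N ℓ (m - k)` limited tails; those not starting with `Λ₁` are three quarters.
-/

open List Finset

namespace List

variable {α : Type*}

theorem not_replicate_prefix_replicate_append {L k : ℕ} {a : α} {t : List α} (hk : k < L)
    (ht : t.head? ≠ some a) : ¬ replicate L a <+: replicate k a ++ t := by
  induction k generalizing L with
  | zero =>
    obtain ⟨L, rfl⟩ := Nat.exists_eq_add_of_lt hk
    rintro ⟨s, rfl⟩
    simp [replicate_succ] at ht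
  | succ k ih =>
    obtain ⟨L, rfl⟩ : ∃ L', L = L' + 1 := Nat.exists_eq_add_one.mpr (by omega)
    simpa [replicate_succ] using ih (by omega)

theorem replicate_infix_replicate_append_iff {L k : ℕ} {a x : α} {t : List α} (hk : k < L)
    (ht : t.head? ≠ some a) : replicate L x <:+: replicate k a ++ t ↔ replicate L x <:+: t := by
  induction k with
  | zero => simp
  | succ k ih =>
    obtain ⟨L, rfl⟩ : ∃ L', L = L' + 1 := Nat.exists_eq_add_one.mpr (by omega)
    rw [replicate_succ (n := k), cons_append, infix_cons_iff, ih (by omega), or_iff_right_iff_imp,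
      replicate_succ, cons_prefix_cons]
    rintro ⟨rfl, h⟩
    exact absurd h (not_replicate_prefix_replicate_append (by omega) ht)

theorem exists_eq_replicate_append_iff_getD {l : List α} {k : ℕ} {a d : α}
    (hk : k ≤ l.length) :
    (∃ t, l = replicate k a ++ t ∧ t.head? ≠ some a) ↔
      (∀ i < k, l.getD i d = a) ∧ (k < l.length → l.getD k d ≠ a) := by
  constructor
  · rintro ⟨t, rfl, ht⟩
    refine ⟨fun i hi => ?_, fun _ => ?_⟩
    · rw [getD_append _ _ _ _ (by simpa using hi), getD_replicate _ hi]
    · rw [getD_append_right _ _ _ _ (by simp), length_replicate, Nat.sub_self,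
        getD_eq_getElem?_getD, ← head?_eq_getElem?]
      cases h : t.head? with
      | none => simp_all
      | some b => exact fun e => ht (h.trans (congrArg some e))
  · rintro ⟨hrun, hnext⟩
    refine ⟨l.drop k, ?_, ?_⟩
    · conv_lhs => rw [← take_append_drop k l]
      congr 1
      refine eq_replicate_iff.mpr ⟨by simp [hk], fun b hb => ?_⟩
      obtain ⟨i, hi, rfl⟩ := mem_iff_getElem.mp hb
      simp only [length_take, lt_min_iff] at hi
      rw [getElem_take, ← getD_eq_getElem l d hi.2]
      exact hrun i hi.1
    · rw [head?_drop]
      rcases lt_or_eq_of_le hk with hlt | heq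
      · simpa [getElem?_eq_getElem hlt, getD_eq_getElem _ _ hlt] using hnext hlt
      · simp [heq]

end List

theorem hasRun_replicate_append_iff {L k : ℕ} {a : Fin 4} {t : List (Fin 4)} (hk : k < L)
    (ht : t.head? ≠ some a) : hasRun L (replicate k a ++ t) ↔ hasRun L t :=
  exists_congr fun _ => replicate_infix_replicate_append_iff hk ht

theorem hasRun_map_iff {L : ℕ} (σ : Equiv.Perm (Fin 4)) {l : List (Fin 4)} :
    hasRun L (l.map σ) ↔ hasRun L l := by
  refine ⟨fun ⟨x, hx⟩ => ⟨σ.symm x, ?_⟩, fun ⟨x, hx⟩ => ⟨σ x, ?_⟩⟩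
  · simpa [List.map_map] using hx.map σ.symm
  · simpa using hx.map σ

def rllVectors (ℓ n : ℕ) : Finset (List.Vector (Fin 4) n) := {v | ¬ hasRun (ℓ + 1) v.toList}

@[simp]
theorem mem_rllVectors {ℓ n : ℕ} {v : List.Vector (Fin 4) n} :
    v ∈ rllVectors ℓ n ↔ ¬ hasRun (ℓ + 1) v.toList := by
  simp [rllVectors]

theorem N_eq_card_rllVectors (ℓ n : ℕ) : N ℓ n = #(rllVectors ℓ n) :=
  Fintype.card_subtype _

theorem card_rllVectors_head_eq (ℓ n : ℕ) (a b : Fin 4) :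
    #{v ∈ rllVectors ℓ (n + 1) | v.head = a} = #{v ∈ rllVectors ℓ (n + 1) | v.head = b} := by
  have hinv : ∀ v : List.Vector (Fin 4) (n + 1),
      (v.map (Equiv.swap a b)).map (Equiv.swap a b) = v := fun v =>
    List.Vector.eq _ _ (by simp [List.Vector.toList_map])
  refine card_nbij' _ _ ?_ ?_ (fun v _ => hinv v) (fun v _ => hinv v) <;>
  · intro v hv
    simp_all [List.Vector.toList_map, hasRun_map_iff, List.Vector.head_map]

theorem card_rllVectors_eq_four_mul (ℓ n : ℕ) (a : Fin 4) :
    #(rllVectors ℓ (n + 1)) = 4 * #{v ∈ rllVectors ℓ (n + 1) | v.head = a} := by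
  rw [card_eq_sum_card_fiberwise (f := List.Vector.head) (t := univ) (fun _ _ => mem_univ _)]
  simp [card_rllVectors_head_eq ℓ n _ a]

theorem four_mul_card_rllVectors_head?_ne (ℓ n : ℕ) (a : Fin 4) :
    4 * #{v ∈ rllVectors ℓ (n + 1) | v.toList.head? ≠ some a} =
      3 * #(rllVectors ℓ (n + 1)) := by
  simp only [List.Vector.head?_toList, ne_eq, Option.some_inj]
  have := card_filter_add_card_filter_not (s := rllVectors ℓ (n + 1)) fun v => v.head = a
  rw [card_rllVectors_eq_four_mul ℓ n a] at this ⊢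
  omega

theorem NΛk_add_eq_card {ℓ k : ℕ} (hk : k ≤ ℓ) (n : ℕ) (a : Fin 4) :
    NΛk ℓ (k + n) a k = #{w ∈ rllVectors ℓ n | w.toList.head? ≠ some a} := by
  have hrun : ∀ {t : List (Fin 4)}, t.head? ≠ some a →
      (hasRun (ℓ + 1) (replicate k a ++ t) ↔ hasRun (ℓ + 1) t) :=
    hasRun_replicate_append_iff (Nat.lt_succ_of_le hk)
  have hinit : ∀ v : List.Vector (Fin 4) (k + n),
      (∃ t, v.toList = replicate k a ++ t ∧ t.head? ≠ some a) ↔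
        (∀ i < k, v.toList.getD i 0 = a) ∧ (k < k + n → v.toList.getD k 0 ≠ a) := fun v => by
    rw [List.exists_eq_replicate_append_iff_getD (by simp), v.toList_length]
  rw [NΛk, Fintype.card_subtype, eq_comm]
  refine card_nbij (fun w => List.Vector.replicate k a ++ w) ?_ ?_ ?_
  · intro w hw
    simp only [mem_coe, Finset.mem_filter, mem_rllVectors, mem_univ, true_and] at hw ⊢
    rw [← hinit, List.Vector.toList_append]
    exact ⟨(hrun hw.2).not.mpr hw.1, w.toList, rfl, hw.2⟩
  · intro w₁ _ w₂ _ h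
    exact List.Vector.eq _ _ (List.append_cancel_left (congrArg List.Vector.toList h))
  · intro v hv
    simp only [mem_coe, Finset.mem_filter, mem_univ, true_and] at hv
    obtain ⟨t, ht, hta⟩ := (hinit v).mpr hv.2
    have htn : t.length = n := by simpa [ht] using v.toList_length
    refine ⟨⟨t, htn⟩, ?_, List.Vector.eq _ _ ht.symm⟩
    exact Finset.mem_filter.mpr ⟨mem_rllVectors.mpr ((hrun hta).not.mp (ht ▸ hv.1)), hta⟩

theorem stmt6_general (ℓ m : ℕ) (Λ₁ : Fin 4) (k : ℕ) (hk2 : k ≤ min ℓ m) (hmk : 1 ≤ m - k) :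
    4 * NΛk ℓ m Λ₁ k = 3 * N ℓ (m - k) := by
  obtain ⟨n, rfl⟩ : ∃ n, m = k + (n + 1) := ⟨m - k - 1, by omega⟩
  rw [Nat.add_sub_cancel_left, NΛk_add_eq_card (le_min_iff.mp hk2).1, N_eq_card_rllVectors]
  exact four_mul_card_rllVectors_head?_ne ℓ n Λ₁

/-- For `ℓ ≥ 1`, `m ≥ 1`, `1 ≤ k ≤ min ℓ m`, and `m − k ≥ 1`:
`4 · N_{Λ₁,k}(m) = 3 · N(m−k)`. -/
theorem stmt6 (ℓ m : ℕ) (hℓ : 1 ≤ ℓ) (hm : 1 ≤ m) (Λ₁ : Fin 4) (k : ℕ)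
    (hk1 : 1 ≤ k) (hk2 : k ≤ min ℓ m) (hmk : 1 ≤ m - k) :
    4 * NΛk ℓ m Λ₁ k = 3 * N ℓ (m - k) :=
  stmt6_general ℓ m Λ₁ k hk2 hmk
end

section
/- For ℓ ≥ 1 and q ≥ 2, the polynomial x^ℓ − (q−1)·(x^(ℓ−1) + x^(ℓ−2) + ... + x + 1) has exactly one real root in the interval (q−1, q). -/
/-!
At `x = s + 1` the geometric sum gives `x^ℓ - s·∑_{i<ℓ} x^i = 1`, while at `x = s` the value is
`-(s + s² + ⋯ + s^(ℓ-1)) < 0`, so the intermediate value theorem produces a root in `(s, s + 1)`.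
It is the only positive root: if `x > 0` is a root and `y = t·x` with `t > 1`, then
`s·∑ y^i = s·∑ t^i x^i < t^ℓ·s·∑ x^i = t^ℓ x^ℓ = y^ℓ`.
-/

open Finset

/-- With `s = q - 1`, the growth polynomial of `q`-ary words avoiding runs of length `ℓ + 1`. -/
def runPoly {R : Type*} [CommRing R] (s : R) (ℓ : ℕ) (x : R) : R :=
  x ^ ℓ - s * ∑ i ∈ range ℓ, x ^ i

section

variable {R : Type*} [CommRing R] {ℓ : ℕ}

theorem runPoly_add_one (s : R) (ℓ : ℕ) : runPoly s ℓ (s + 1) = 1 := by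
  have hgeom := geom_sum_mul (s + 1) ℓ
  rw [add_sub_cancel_right] at hgeom
  unfold runPoly
  linear_combination -hgeom

theorem runPoly_self_neg [LinearOrder R] [IsStrictOrderedRing R] {s : R} (hs : 0 < s)
    (hℓ : 2 ≤ ℓ) : runPoly s ℓ s < 0 := by
  obtain ⟨m, rfl⟩ : ∃ m, ℓ = m + 1 := ⟨ℓ - 1, by omega⟩
  have hval : runPoly s (m + 1) s = -(s * ∑ i ∈ range m, s ^ i) := by
    unfold runPoly
    rw [sum_range_succ]
    ring
  have hsum : 0 < ∑ i ∈ range m, s ^ i :=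
    sum_pos (fun i _ => pow_pos hs i) (nonempty_range_iff.2 (by omega))
  rw [hval, neg_neg_iff_pos]
  exact mul_pos hs hsum

end

section

variable {K : Type*} [Field K] [LinearOrder K] [IsStrictOrderedRing K] {s x y : K} {ℓ : ℕ}

theorem runPoly_pos_of_root_lt (hs : 0 < s) (hℓ : ℓ ≠ 0) (hx : 0 < x)
    (hroot : runPoly s ℓ x = 0) (hxy : x < y) : 0 < runPoly s ℓ y := by
  set t := y / x
  have ht : 1 < t := (one_lt_div hx).2 hxy
  have hy : y = t * x := (div_mul_cancel₀ y hx.ne').symm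
  have hsum : ∑ i ∈ range ℓ, y ^ i < t ^ ℓ * ∑ i ∈ range ℓ, x ^ i := by
    rw [mul_sum]
    refine sum_lt_sum_of_nonempty (nonempty_range_iff.2 hℓ) fun i hi => ?_
    rw [hy, mul_pow]
    exact mul_lt_mul_of_pos_right (pow_lt_pow_right₀ ht (mem_range.1 hi)) (pow_pos hx i)
  have hxℓ : x ^ ℓ = s * ∑ i ∈ range ℓ, x ^ i := sub_eq_zero.1 hroot
  unfold runPoly
  refine sub_pos.2 ?_
  calc s * ∑ i ∈ range ℓ, y ^ i < s * (t ^ ℓ * ∑ i ∈ range ℓ, x ^ i) :=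
        mul_lt_mul_of_pos_left hsum hs
    _ = y ^ ℓ := by rw [hy, mul_pow, hxℓ]; ring

theorem eq_of_runPoly_eq_zero (hs : 0 < s) (hℓ : ℓ ≠ 0) (hx : 0 < x) (hy : 0 < y)
    (hrx : runPoly s ℓ x = 0) (hry : runPoly s ℓ y = 0) : x = y := by
  rcases lt_trichotomy x y with hxy | hxy | hxy
  · exact absurd hry (runPoly_pos_of_root_lt hs hℓ hx hrx hxy).ne'
  · exact hxy
  · exact absurd hrx (runPoly_pos_of_root_lt hs hℓ hy hry hxy).ne'

end

theorem exists_runPoly_eq_zero_mem_Ioo {s : ℝ} {ℓ : ℕ} (hs : 0 < s) (hℓ : 2 ≤ ℓ) :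
    ∃ x ∈ Set.Ioo s (s + 1), runPoly s ℓ x = 0 := by
  have hcont : Continuous (runPoly s ℓ) := by unfold runPoly; fun_prop
  refine intermediate_value_Ioo (by linarith) hcont.continuousOn ⟨runPoly_self_neg hs hℓ, ?_⟩
  rw [runPoly_add_one]
  exact one_pos

/-- For `ℓ ≥ 2` and `q ≥ 2`, the polynomial
`x^ℓ − (q−1)·(x^(ℓ−1) + ⋯ + x + 1)` has exactly one real root in the open interval
`(q−1, q)`. (For `ℓ = 1` the root is exactly `q−1`, so `ℓ ≥ 2` is assumed for the
strict lower bound.) -/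
theorem stmt14 (ℓ q : ℕ) (hℓ : 2 ≤ ℓ) (hq : 2 ≤ q) :
    ∃! x : ℝ, x ∈ Set.Ioo ((q : ℝ) - 1) (q : ℝ) ∧
      x ^ ℓ - ((q : ℝ) - 1) * ∑ i ∈ Finset.range ℓ, x ^ i = 0 := by
  have hs : (0 : ℝ) < q - 1 := by
    have : (2 : ℝ) ≤ q := by exact_mod_cast hq
    linarith
  obtain ⟨x, hx, hrx⟩ := exists_runPoly_eq_zero_mem_Ioo hs hℓ
  rw [sub_add_cancel] at hx
  refine ⟨x, ⟨hx, hrx⟩, fun y ⟨hy, hry⟩ => ?_⟩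
  exact eq_of_runPoly_eq_zero hs (by omega) (hs.trans hy.1) (hs.trans hx.1) hry hrx
end
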